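/- arXiv:1508.01553 — 7 statements merged into one kernel-verified Lean document; each statement's English description precedes it below -/
import Mathlib

section
/- Let N ≥ 1 be an integer, let ε ∈ (0,1], and let a_1, …, a_N be nonnegative real numbers. Then ∏_{n=1}^N (1 − ε^{a_n}) ≤ exp(−N · ε^{(1/N) Σ_{n=1}^N a_n}). -/
open Finset Real

lemma Real.prod_one_sub_le_exp_neg_sum {ι : Type*} (s : Finset ι) {x : ι → ℝ}
    (hx : ∀ i ∈ s, x i ≤ 1) : ∏ i ∈ s, (1 - x i) ≤ exp (-∑ i ∈ s, x i) := by
  rw [← sum_neg_distrib, exp_sum]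
  exact prod_le_prod (fun i hi => sub_nonneg.2 (hx i hi)) fun i _ => one_sub_le_exp_neg (x i)

lemma ConvexOn.card_mul_map_average_le {ι : Type*} {S : Set ℝ} {f : ℝ → ℝ} (hf : ConvexOn ℝ S f)
    (s : Finset ι) {p : ι → ℝ} (hp : ∀ i ∈ s, p i ∈ S) :
    #s * f (1 / #s * ∑ i ∈ s, p i) ≤ ∑ i ∈ s, f (p i) := by
  rcases s.eq_empty_or_nonempty with rfl | hs
  · simp
  have hcard : (0 : ℝ) < #s := by exact_mod_cast hs.card_pos
  have jensen := hf.map_sum_le (t := s) (w := fun _ => 1 / (#s : ℝ)) (p := p)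
    (fun _ _ => by positivity) (by simp [hcard.ne']) hp
  simp only [smul_eq_mul, ← mul_sum] at jensen
  calc #s * f (1 / #s * ∑ i ∈ s, p i)
      ≤ #s * (1 / #s * ∑ i ∈ s, f (p i)) := mul_le_mul_of_nonneg_left jensen hcard.le
    _ = ∑ i ∈ s, f (p i) := by field_simp

theorem stmt2_general (N : ℕ) (ε : ℝ) (hε0 : 0 < ε) (hε1 : ε ≤ 1)
    (a : Fin N → ℝ) (ha : ∀ n, 0 ≤ a n) :
    ∏ n, (1 - ε ^ (a n))
      ≤ Real.exp (-(N : ℝ) * ε ^ ((1 / (N : ℝ)) * ∑ n, a n)) := by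
  calc ∏ n, (1 - ε ^ a n)
      ≤ exp (-∑ n, ε ^ a n) :=
        prod_one_sub_le_exp_neg_sum _ fun n _ => rpow_le_one hε0.le hε1 (ha n)
    _ ≤ exp (-(N : ℝ) * ε ^ (1 / (N : ℝ) * ∑ n, a n)) := by
        rw [exp_le_exp, neg_mul, neg_le_neg_iff]
        simpa using (convexOn_rpow_left hε0).card_mul_map_average_le univ (p := a) (by simp)

/-- **Product-to-exponential bound for erasure probabilities.**
For `N ≥ 1`, `ε ∈ (0,1]`, and nonnegative reals `a 1, …, a N`:
`∏ (1 − ε^(a n)) ≤ exp(−N · ε^((1/N) Σ a n))` where `^` is the real power. -/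
theorem stmt2 (N : ℕ) (hN : 1 ≤ N) (ε : ℝ) (hε0 : 0 < ε) (hε1 : ε ≤ 1)
    (a : Fin N → ℝ) (ha : ∀ n, 0 ≤ a n) :
    ∏ n, (1 - ε ^ (a n))
      ≤ Real.exp (-(N : ℝ) * ε ^ ((1 / (N : ℝ)) * ∑ n, a n)) :=
  stmt2_general N ε hε0 hε1 a ha
end

section
/- Let N ≥ 1 be an integer, ε ∈ (0,1), P ∈ (0,1), and let a_1, …, a_N be nonnegative real numbers. If ∏_{n=1}^N (1 − ε^{a_n}) ≥ 1 − P, then Σ_{n=1}^N a_n ≥ N · (ln N − ln ln(1/(1−P))) / ln(1/ε). -/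
lemma rpow_sum_aux {ι : Type*} (s : Finset ι) (x : ℝ) (hx : 0 < x) (f : ι → ℝ) :
    x ^ (∑ i ∈ s, f i) = ∏ i ∈ s, x ^ f i := by
  classical
  induction s using Finset.cons_induction with
  | empty => simp
  | cons i s hi ih => rw [Finset.sum_cons, Finset.prod_cons, Real.rpow_add hx, ih]

/-- **Degree lower bound (Theorem 5 core).**
If `∏ (1 − ε^(a n)) ≥ 1 − P` with `ε, P ∈ (0,1)` and `a n ≥ 0`, then
`Σ a n ≥ N (ln N − ln ln(1/(1−P)))/ ln(1/ε)`. All logs are natural. -/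
theorem stmt3 (N : ℕ) (hN : 1 ≤ N) (ε P : ℝ) (hε0 : 0 < ε) (hε1 : ε < 1)
    (hP0 : 0 < P) (hP1 : P < 1) (a : Fin N → ℝ) (ha : ∀ n, 0 ≤ a n)
    (h : 1 - P ≤ ∏ n, (1 - ε ^ (a n))) :
    (N : ℝ) * (Real.log N - Real.log (Real.log (1 / (1 - P)))) / Real.log (1 / ε)
      ≤ ∑ n, a n := by
  have hNpos : (0:ℝ) < N := by exact_mod_cast hN
  set S := ∑ n, a n with hS
  set K := Real.log (1 / (1 - P)) with hK
  have h1P : (0:ℝ) < 1 - P := by linarith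
  have hKpos : 0 < K := Real.log_pos (by rw [lt_div_iff₀ h1P]; linarith)
  have hxpos : ∀ n, 0 < ε ^ a n := fun n => Real.rpow_pos_of_pos hε0 _
  -- step 1: ∏ (1 - ε^a n) ≤ exp (-∑ ε^a n)
  have h1 : ∏ n, (1 - ε ^ a n) ≤ Real.exp (-∑ n, ε ^ a n) := by
    calc ∏ n, (1 - ε ^ a n) ≤ ∏ n, Real.exp (-(ε ^ a n)) := by
          apply Finset.prod_le_prod
          · intro n _
            have : ε ^ a n ≤ 1 := Real.rpow_le_one hε0.le hε1.le (ha n)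
            linarith
          · intro n _
            have := Real.add_one_le_exp (-(ε ^ a n))
            linarith
      _ = Real.exp (∑ n, -(ε ^ a n)) := (Real.exp_sum _ _).symm
      _ = Real.exp (-∑ n, ε ^ a n) := by rw [Finset.sum_neg_distrib]
  -- step 2: ∑ ε^a n ≤ K
  have h2 : ∑ n, ε ^ a n ≤ K := by
    have hle : 1 - P ≤ Real.exp (-∑ n, ε ^ a n) := h.trans h1
    have := Real.log_le_log h1P hle
    rw [Real.log_exp] at this
    rw [hK, Real.log_div one_ne_zero (by linarith), Real.log_one]
    linarith
  -- step 3 (Jensen/AM-GM): N * ε^(S/N) ≤ ∑ ε^a n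
  have h3 : (N : ℝ) * ε ^ (S / N) ≤ ∑ n, ε ^ a n := by
    have hw : ∀ i ∈ (Finset.univ : Finset (Fin N)), (0:ℝ) ≤ (N:ℝ)⁻¹ :=
      fun _ _ => by positivity
    have hw' : ∑ _i : Fin N, (N:ℝ)⁻¹ = 1 := by
      simp [Finset.sum_const, mul_comm]
      field_simp
    have hz : ∀ i ∈ (Finset.univ : Finset (Fin N)), (0:ℝ) ≤ ε ^ a i :=
      fun i _ => (hxpos i).le
    have amgm := Real.geom_mean_le_arith_mean_weighted Finset.univ
      (fun _ => (N:ℝ)⁻¹) (fun n => ε ^ a n) hw hw' hz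
    have hlhs : ∏ n : Fin N, (ε ^ a n) ^ ((N:ℝ)⁻¹) = ε ^ (S / N) := by
      have : ∀ n : Fin N, (ε ^ a n) ^ ((N:ℝ)⁻¹) = ε ^ (a n * (N:ℝ)⁻¹) := by
        intro n; rw [← Real.rpow_mul hε0.le]
      simp_rw [this]
      rw [← rpow_sum_aux _ _ hε0, ← Finset.sum_mul, hS, div_eq_mul_inv]
    have hrhs : ∑ n : Fin N, (N:ℝ)⁻¹ * ε ^ a n = (N:ℝ)⁻¹ * ∑ n, ε ^ a n := by
      rw [Finset.mul_sum]
    rw [hlhs, hrhs] at amgm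
    calc (N:ℝ) * ε ^ (S / N) ≤ (N:ℝ) * ((N:ℝ)⁻¹ * ∑ n, ε ^ a n) := by
          exact mul_le_mul_of_nonneg_left amgm hNpos.le
      _ = ∑ n, ε ^ a n := by field_simp
  -- combine: N * ε^(S/N) ≤ K, take logs
  have h4 : (N : ℝ) * ε ^ (S / N) ≤ K := h3.trans h2
  have hpos : 0 < (N:ℝ) * ε ^ (S / N) := mul_pos hNpos (Real.rpow_pos_of_pos hε0 _)
  have h5 := Real.log_le_log hpos h4
  rw [Real.log_mul (ne_of_gt hNpos) (ne_of_gt (Real.rpow_pos_of_pos hε0 _)),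
      Real.log_rpow hε0] at h5
  -- log (1/ε) = - log ε > 0
  have hL : Real.log (1 / ε) = - Real.log ε := by
    rw [one_div, Real.log_inv]
  have hLpos : 0 < Real.log (1 / ε) := Real.log_pos (by rw [lt_div_iff₀ hε0]; linarith)
  -- h5 : log N + S/N * log ε ≤ log K
  rw [div_le_iff₀ hLpos]
  have : Real.log N - Real.log K ≤ S / N * Real.log (1/ε) := by
    rw [hL]; linarith
  have hh := mul_le_mul_of_nonneg_left this hNpos.le
  rw [mul_comm (S / ↑N) _, ← mul_assoc] at hh
  calc (N:ℝ) * (Real.log N - Real.log K) ≤ (N:ℝ) * Real.log (1/ε) * (S / N) := hh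
    _ = S * Real.log (1/ε) := by field_simp
end

section
/- Let N ≥ 1 be an integer, ε ∈ (0,1), δ ∈ (0,1), D > 0 a real number, and let C_1, …, C_N be nonnegative real numbers. If ∏_{v=1}^N (1 − ε^{D·C_v}) > 1 − δ, then Σ_{v=1}^N C_v > (N/D) · (ln N − ln ln(1/(1−δ))) / ln(1/ε). -/
/-- **Broadcast lower bound for constant-degree BEC networks (core).**
If `∏ (1 − ε^(D · C v)) > 1 − δ` with `ε, δ ∈ (0,1)`, `D > 0`, `C v ≥ 0`, then
`Σ C v > (N/D)(ln N − ln ln(1/(1−δ)))/ln(1/ε)`. All logs are natural. -/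
theorem stmt4 (N : ℕ) (hN : 1 ≤ N) (ε δ D : ℝ) (hε0 : 0 < ε) (hε1 : ε < 1)
    (hδ0 : 0 < δ) (hδ1 : δ < 1) (hD : 0 < D)
    (C : Fin N → ℝ) (hC : ∀ v, 0 ≤ C v)
    (h : 1 - δ < ∏ v, (1 - ε ^ (D * C v))) :
    ((N : ℝ) / D) * (Real.log N - Real.log (Real.log (1 / (1 - δ)))) / Real.log (1 / ε)
      < ∑ v, C v := by
  set S := ∑ v, C v with hS
  have hNpos : (0:ℝ) < N := by exact_mod_cast hN
  have hδ' : (0:ℝ) < 1 - δ := by linarith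
  set p : Fin N → ℝ := fun v => ε ^ (D * C v) with hpdef
  have hp : ∀ v, 0 < p v := fun v => Real.rpow_pos_of_pos hε0 _
  have hp1 : ∀ v, p v ≤ 1 := fun v =>
    Real.rpow_le_one hε0.le hε1.le (mul_nonneg hD.le (hC v))
  -- Step 1: ∏ (1 - p v) ≤ exp (-∑ p v)
  have h1 : ∏ v, (1 - p v) ≤ Real.exp (-∑ v, p v) := by
    have he : Real.exp (-∑ v, p v) = ∏ v, Real.exp (-(p v)) := by
      rw [← Real.exp_sum, ← Finset.sum_neg_distrib]
    rw [he]
    refine Finset.prod_le_prod (fun v _ => by linarith [hp1 v]) (fun v _ => ?_)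
    linarith [Real.add_one_le_exp (-(p v))]
  set L := Real.log (1 / (1 - δ)) with hLdef
  have hL : 0 < L := Real.log_pos (by rw [lt_div_iff₀ hδ']; linarith)
  -- Step 2: ∑ p v < L
  have hsum : ∑ v, p v < L := by
    have h2 : 1 - δ < Real.exp (-∑ v, p v) := lt_of_lt_of_le h h1
    have h3 := Real.log_lt_log hδ' h2
    rw [Real.log_exp] at h3
    rw [hLdef, one_div, Real.log_inv]
    linarith
  -- Step 3: AM-GM
  have hAM : ε ^ (D * S / N) ≤ (1 / N) * ∑ v, p v := by
    have hgm := Real.geom_mean_le_arith_mean_weighted Finset.univ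
      (fun _ : Fin N => 1 / (N:ℝ)) p (fun i _ => by positivity)
      (by
        rw [Finset.sum_const, Finset.card_univ, Fintype.card_fin, nsmul_eq_mul]
        field_simp) (fun i _ => (hp i).le)
    have hprod : ∏ v : Fin N, p v ^ (1 / (N:ℝ)) = ε ^ (D * S / N) := by
      have hv : ∀ v : Fin N, p v ^ (1 / (N:ℝ)) = ε ^ (D * C v * (1 / (N:ℝ))) := fun v => by
        simp only [hpdef]
        exact (Real.rpow_mul hε0.le _ _).symm
      rw [Finset.prod_congr rfl (fun v _ => hv v), ← Real.rpow_sum_of_pos hε0]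
      congr 1
      simp only [mul_one_div]
      rw [← Finset.sum_div, ← Finset.mul_sum, hS]
    calc ε ^ (D * S / N) = ∏ v : Fin N, p v ^ (1 / (N:ℝ)) := hprod.symm
      _ ≤ ∑ v : Fin N, (1 / (N:ℝ)) * p v := hgm
      _ = (1 / N) * ∑ v, p v := by rw [Finset.mul_sum]
  -- Step 4: take logs
  have hkey : ε ^ (D * S / N) < L / N := by
    have := hAM.trans_lt (by
      apply mul_lt_mul_of_pos_left hsum
      positivity)
    calc ε ^ (D * S / N) < 1 / N * L := this
      _ = L / N := by ring
  have hlog : (D * S / N) * Real.log ε < Real.log L - Real.log N := by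
    have h4 := Real.log_lt_log (Real.rpow_pos_of_pos hε0 _) hkey
    rw [Real.log_rpow hε0, Real.log_div hL.ne' hNpos.ne'] at h4
    exact h4
  have hBlog : 0 < Real.log (1 / ε) := Real.log_pos (by rw [lt_div_iff₀ hε0]; linarith)
  have hBeq : Real.log (1 / ε) = -Real.log ε := by rw [one_div, Real.log_inv]
  have hkey2 : Real.log N - Real.log L < (D * S / N) * Real.log (1 / ε) := by
    rw [hBeq]; linarith
  rw [div_lt_iff₀ hBlog]
  have := mul_lt_mul_of_pos_left hkey2 (by positivity : (0:ℝ) < (N:ℝ) / D)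
  calc (N:ℝ) / D * (Real.log N - Real.log L)
      < (N:ℝ) / D * ((D * S / N) * Real.log (1 / ε)) := this
    _ = S * Real.log (1 / ε) := by field_simp
end

section
/- Let p, ε ∈ [0,1], let A be a random N×N matrix over 𝔽₂ whose entries are independent and each equals 1 with probability p, let G = [I | A] be the N×(2N) matrix whose first N columns form the identity and whose last N columns are the columns of A, and let S ⊆ {1,…,2N} be a random erasure pattern, independent of A, with each coordinate included independently with probability ε. Then for every fixed x₀ ∈ 𝔽₂^N with exactly k nonzero coordinates (k ≥ 1), the probability over A and S jointly that x₀ is confused with the zero vector under S equals ε^k · (ε + (1−ε)·(1+(1−2p)^k)/2)^N. -/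
open scoped Classical

/-- `x₁` is *confused with* `x₂` under the erasure pattern `S`: the codewords
`x₁ᵀG` and `x₂ᵀG` agree on every coordinate outside `S`. -/
def Confused {n m : Type*} [Fintype n] (G : Matrix n m (ZMod 2))
    (x₁ x₂ : n → ZMod 2) (S : Finset m) : Prop :=
  ∀ j, j ∉ S → Matrix.vecMul x₁ G j = Matrix.vecMul x₂ G j

/-- Joint probability of an event `E` depending on a random `N×N` matrix `A`
over `𝔽₂` with i.i.d. Bernoulli(p) entries and an independent random erasure
pattern `S ⊆ Fin N ⊕ Fin N` with each coordinate erased with probability `ε`. -/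
noncomputable def jointProb (N : ℕ) (p ε : ℝ)
    (E : Matrix (Fin N) (Fin N) (ZMod 2) → Finset (Fin N ⊕ Fin N) → Prop) : ℝ :=
  ∑ A : Matrix (Fin N) (Fin N) (ZMod 2), ∑ S : Finset (Fin N ⊕ Fin N),
    if E A S then
      (∏ i, ∏ j, if A i j = 1 then p else 1 - p) *
        (ε ^ S.card * (1 - ε) ^ (2 * N - S.card))
    else 0

/-!
Conditioned on `A`, the erasures act coordinatewise: `x₀` is confused with `0` iff every
coordinate `c` of the codeword `x₀ᵀ[I | A]` with `c ∉ S` vanishes, so averaging over `S` gives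
`∏_c ε^[codeword c ≠ 0]`. The systematic half contributes `ε^k`. The columns of `A` are
independent, so the other half is the `N`-th power of the expectation for one Bernoulli(p)
column `a`, where the codeword entry vanishes with probability `P(x₀ ⬝ a = 0)`; writing
`[z = 0] = (1 + (-1)^z) / 2` and factoring the character sum gives
`P(x₀ ⬝ a = 0) = (1 + (1 - 2p)^k) / 2`.
-/

open Finset Matrix

noncomputable def bernoulliWeight (p : ℝ) (a : ZMod 2) : ℝ := if a = 1 then p else 1 - p

def parityChar (z : ZMod 2) : ℝ := if z = 0 then 1 else -1

lemma prod_ite_one_eq_pow {ι M : Type*} [Fintype ι] [CommMonoid M] (P : ι → Prop)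
    [DecidablePred P] (a : M) : ∏ i, (if P i then a else 1) = a ^ #{i | P i} := by
  rw [prod_ite, prod_const_one, mul_one, prod_const]

lemma sum_zmod_two {M : Type*} [AddCommMonoid M] (f : ZMod 2 → M) : ∑ a, f a = f 0 + f 1 :=
  Fin.sum_univ_two f

lemma zmod_two_eq_zero_or_eq_one (a : ZMod 2) : a = 0 ∨ a = 1 := by
  revert a; decide

lemma zmod_two_one_ne_zero : (1 : ZMod 2) ≠ 0 := by decide

lemma parityChar_add (a b : ZMod 2) : parityChar (a + b) = parityChar a * parityChar b := by
  rcases zmod_two_eq_zero_or_eq_one a with rfl | rfl <;>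
    rcases zmod_two_eq_zero_or_eq_one b with rfl | rfl <;>
    simp [parityChar, show (1 + 1 : ZMod 2) = 0 by decide]

lemma parityChar_sum {ι : Type*} (s : Finset ι) (v : ι → ZMod 2) :
    parityChar (∑ i ∈ s, v i) = ∏ i ∈ s, parityChar (v i) := by
  induction s using Finset.cons_induction with
  | empty => simp [parityChar]
  | cons a s ha ih => rw [sum_cons, prod_cons, parityChar_add, ih]

lemma ite_eq_zero_eq_one_add_parityChar_div_two (z : ZMod 2) :
    (if z = 0 then 1 else 0 : ℝ) = (1 + parityChar z) / 2 := by
  rcases zmod_two_eq_zero_or_eq_one z with rfl | rfl <;> norm_num [parityChar]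

lemma sum_bernoulliWeight (p : ℝ) : ∑ a, bernoulliWeight p a = 1 := by
  simp [sum_zmod_two, bernoulliWeight, zmod_two_one_ne_zero.symm]

lemma sum_bernoulliWeight_mul_parityChar (p : ℝ) (x : ZMod 2) :
    ∑ a, bernoulliWeight p a * parityChar (x * a) = if x ≠ 0 then 1 - 2 * p else 1 := by
  rcases zmod_two_eq_zero_or_eq_one x with rfl | rfl <;>
    simp [sum_zmod_two, bernoulliWeight, parityChar, zmod_two_one_ne_zero.symm]; ring

section BernoulliVector

variable {m : Type*} [Fintype m] [DecidableEq m]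

lemma sum_prod_bernoulliWeight (p : ℝ) : ∑ c : m → ZMod 2, ∏ i, bernoulliWeight p (c i) = 1 := by
  rw [← Fintype.prod_sum]
  simp [sum_bernoulliWeight]

lemma sum_prod_bernoulliWeight_mul_ite_dotProduct_eq_zero (p : ℝ) (x : m → ZMod 2) :
    ∑ c : m → ZMod 2, (∏ i, bernoulliWeight p (c i)) * (if x ⬝ᵥ c = 0 then 1 else 0)
      = (1 + (1 - 2 * p) ^ #{i | x i ≠ 0}) / 2 := by
  have hchar : ∀ c : m → ZMod 2,
      (∏ i, bernoulliWeight p (c i)) * (if x ⬝ᵥ c = 0 then 1 else 0)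
        = ((∏ i, bernoulliWeight p (c i))
            + ∏ i, bernoulliWeight p (c i) * parityChar (x i * c i)) / 2 := by
    intro c
    rw [ite_eq_zero_eq_one_add_parityChar_div_two, dotProduct, parityChar_sum, prod_mul_distrib]
    ring
  rw [sum_congr rfl fun c _ => hchar c, ← sum_div, sum_add_distrib, sum_prod_bernoulliWeight,
    ← Fintype.prod_sum (fun i a => bernoulliWeight p a * parityChar (x i * a))]
  simp_rw [sum_bernoulliWeight_mul_parityChar, prod_ite_one_eq_pow]

lemma sum_prod_bernoulliWeight_mul_ite_dotProduct (p ε : ℝ) (x : m → ZMod 2) :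
    ∑ c : m → ZMod 2, (∏ i, bernoulliWeight p (c i)) * (if x ⬝ᵥ c = 0 then 1 else ε)
      = ε + (1 - ε) * ((1 + (1 - 2 * p) ^ #{i | x i ≠ 0}) / 2) := by
  have hsplit : ∀ z : ZMod 2,
      (if z = 0 then 1 else ε) = ε + (1 - ε) * (if z = 0 then 1 else 0) := by
    intro z
    split_ifs <;> ring
  simp_rw [hsplit, mul_add, sum_add_distrib, ← sum_mul, sum_prod_bernoulliWeight,
    mul_left_comm _ (1 - ε), ← mul_sum, sum_prod_bernoulliWeight_mul_ite_dotProduct_eq_zero,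
    one_mul]

end BernoulliVector

lemma sum_erasure_ite_forall_notMem {ι : Type*} [Fintype ι] (P : ι → Prop) (ε : ℝ) :
    ∑ S : Finset ι, (if ∀ i, i ∉ S → P i then ε ^ #S * (1 - ε) ^ (Fintype.card ι - #S) else 0)
      = ∏ i, if P i then 1 else ε := by
  classical
  calc _ = ∑ S : Finset ι, (∏ i ∈ S, ε) * ∏ i ∈ Sᶜ, if P i then 1 - ε else 0 := by
        refine sum_congr rfl fun S _ => ?_
        rw [prod_const, prod_ite_zero, prod_const, card_compl, mul_ite, mul_zero]
        simp only [mem_compl]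
    _ = ∏ i, (ε + if P i then 1 - ε else 0) := (Fintype.prod_add _ _).symm
    _ = _ := by
        refine prod_congr rfl fun i _ => ?_
        split_ifs <;> ring

lemma sum_erasure_confused_zero {n m : Type*} [Fintype n] [Fintype m]
    (G : Matrix n m (ZMod 2)) (x : n → ZMod 2) (ε : ℝ) :
    ∑ S : Finset m, (if Confused G x 0 S then ε ^ #S * (1 - ε) ^ (Fintype.card m - #S) else 0)
      = ∏ j, if (x ᵥ* G) j = 0 then 1 else ε := by
  convert sum_erasure_ite_forall_notMem (fun j => (x ᵥ* G) j = 0) ε using 4 with S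
  simp [Confused]

lemma sum_matrix_prod_col {m n R : Type*} [Fintype m] [Fintype n] [Fintype R] [DecidableEq m]
    [DecidableEq n] (F : n → (m → R) → ℝ) :
    ∑ A : Matrix m n R, ∏ j, F j (Aᵀ j) = ∏ j, ∑ c : m → R, F j c := by
  rw [Fintype.prod_sum F]
  exact Fintype.sum_equiv (Equiv.piComm fun (_ : m) (_ : n) => R) _ _ fun _ => rfl

theorem stmt7_general (N : ℕ) (p ε : ℝ) (x₀ : Fin N → ZMod 2) (k : ℕ)
    (hcard : (Finset.univ.filter (fun i => x₀ i ≠ 0)).card = k) :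
    jointProb N p ε (fun A S => Confused (Matrix.fromCols 1 A) x₀ 0 S)
      = ε ^ k * (ε + (1 - ε) * ((1 + (1 - 2 * p) ^ k) / 2)) ^ N := by
  have hsys : ∏ i, (if x₀ i = 0 then 1 else ε) = ε ^ k := by
    rw [← hcard, ← prod_ite_one_eq_pow]
    simp only [ne_eq, ite_not]
  calc jointProb N p ε (fun A S => Confused (Matrix.fromCols 1 A) x₀ 0 S)
      = ∑ A : Matrix (Fin N) (Fin N) (ZMod 2), (∏ j, ∏ i, bernoulliWeight p (A i j)) *
          ∏ c, if (x₀ ᵥ* fromCols (1 : Matrix (Fin N) (Fin N) (ZMod 2)) A) c = 0 then 1 else ε := by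
        unfold jointProb
        refine sum_congr rfl fun A _ => ?_
        rw [← sum_erasure_confused_zero, mul_sum, prod_comm]
        simp [mul_ite, two_mul, bernoulliWeight]
    _ = ε ^ k * ∑ A : Matrix (Fin N) (Fin N) (ZMod 2),
          ∏ j, (∏ i, bernoulliWeight p (Aᵀ j i)) * (if x₀ ⬝ᵥ Aᵀ j = 0 then 1 else ε) := by
        rw [mul_sum]
        refine sum_congr rfl fun A _ => ?_
        rw [vecMul_fromCols, vecMul_one, Fintype.prod_sum_type, prod_mul_distrib, ← hsys]
        -- the remaining factors agree up to defeq: `(x₀ ᵥ* A) j` unfolds to `x₀ ⬝ᵥ Aᵀ j`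
        exact mul_left_comm _ _ _
    _ = _ := by
        rw [sum_matrix_prod_col (fun _ c => (∏ i, bernoulliWeight p (c i)) *
          (if x₀ ⬝ᵥ c = 0 then 1 else ε)), sum_prod_bernoulliWeight_mul_ite_dotProduct,
          prod_const, card_univ, Fintype.card_fin, hcard]

/-- **Exact ambiguity probability of the GC-3 code (Lemma 7).**
For the systematic generator matrix `[I | A]` with `A` a random Erdős–Rényi
adjacency matrix and an independent BEC(ε) erasure pattern, the probability
that a fixed `x₀` of Hamming weight `k ≥ 1` is confused with the zero vector
equals `ε^k (ε + (1−ε)(1+(1−2p)^k)/2)^N`. -/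
theorem stmt7 (N : ℕ) (p ε : ℝ) (hp0 : 0 ≤ p) (hp1 : p ≤ 1)
    (hε0 : 0 ≤ ε) (hε1 : ε ≤ 1) (x₀ : Fin N → ZMod 2) (k : ℕ) (hk : 1 ≤ k)
    (hcard : (Finset.univ.filter (fun i => x₀ i ≠ 0)).card = k) :
    jointProb N p ε (fun A S => Confused (Matrix.fromCols 1 A) x₀ 0 S)
      = ε ^ k * (ε + (1 - ε) * ((1 + (1 - 2 * p) ^ k) / 2)) ^ N :=
  stmt7_general N p ε x₀ k hcard
end

section
/- Let N ≥ 2 be an integer, let c > 0 with p := c·ln N / N ≤ 1/2, let δ > 0, let ε₀ ∈ [0,1), set A_δ := (1−ε₀)(1−e^{−2cδ})/2 and a := c(1−ε₀)(1−cδ), and let ε be a real number with 0 < ε ≤ A_δ/2 and e·ε·N^{1−a} ≤ 1. Then Σ_{k=1}^N C(N,k) · ε^k · (ε₀ + (1−ε₀)·(1+(1−2p)^k)/2)^N ≤ (1 − A_δ/2)^N + δ·e·ε·N^{2−a} / ln N. -/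
/-!
Split the sum at `k p = c δ`, where `p = c ln N / N`, and write
`q_k = ε₀ + (1 - ε₀)(1 + (1 - 2p)^k) / 2`.

For `k p > c δ`, `(1 - 2p)^k ≤ e^{-2kp} ≤ e^{-2cδ}` gives `q_k ≤ 1 - A_δ`, and the binomial
theorem bounds these terms by `((1 + ε)(1 - A_δ))^N ≤ (1 - A_δ/2)^N` since `ε ≤ A_δ/2`.

For `k p ≤ c δ`, `e^{-t} ≤ 1 - t + t²/2` gives `q_k ≤ e^{-(1-ε₀)(1-cδ)kp}`, hence
`q_k^N ≤ N^{-ak}` because `pN = c ln N`. With `C(N,k) ≤ N^k` each such term is at most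
`(ε N^{1-a})^k ≤ ε N^{1-a}`, and there are at most `cδ/p = δN / ln N` of them.
-/

open Real Finset

/-- `(1 + (1 - 2p)^k) / 2` is the probability that a binomial `(k, p)` count is even; with
`x = 1 - 2p` this is the probability that a parity, erased with probability `ε₀`, misses a given
set of `k` erased bits. -/
noncomputable def parityFactor (ε₀ x : ℝ) (k : ℕ) : ℝ :=
  ε₀ + (1 - ε₀) * ((1 + x ^ k) / 2)

lemma Real.exp_neg_le_one_sub_add_sq_div_two {t : ℝ} (ht : 0 ≤ t) :
    exp (-t) ≤ 1 - t + t ^ 2 / 2 := by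
  have hpos : 0 ≤ 1 - t + t ^ 2 / 2 := by nlinarith [sq_nonneg (t - 1)]
  -- `(1 - t + t²/2)(1 + t + t²/2) = 1 + t⁴/4`
  have h : 1 ≤ (1 - t + t ^ 2 / 2) * exp t :=
    calc 1 ≤ (1 - t + t ^ 2 / 2) * (1 + t + t ^ 2 / 2) := by nlinarith [sq_nonneg (t ^ 2)]
      _ ≤ (1 - t + t ^ 2 / 2) * exp t := by gcongr; exact quadratic_le_exp_of_nonneg ht
  rw [exp_neg, inv_le_iff_one_le_mul₀ (exp_pos t)]
  linarith [mul_comm (exp t) (1 - t + t ^ 2 / 2)]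

lemma one_sub_pow_le_exp_neg_mul {y : ℝ} (hy : y ≤ 1) (k : ℕ) :
    (1 - y) ^ k ≤ exp (-(k * y)) :=
  calc (1 - y) ^ k ≤ exp (-y) ^ k := pow_le_pow_left₀ (by linarith) (one_sub_le_exp_neg y) k
    _ = exp (-(k * y)) := by rw [← exp_nat_mul, mul_neg]

section parityFactor

variable {ε₀ x p b : ℝ} {k : ℕ}

lemma parityFactor_eq (ε₀ x : ℝ) (k : ℕ) :
    parityFactor ε₀ x k = 1 - (1 - ε₀) * (1 - x ^ k) / 2 := by
  unfold parityFactor; ring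

lemma parityFactor_nonneg (h0 : 0 ≤ ε₀) (h1 : ε₀ ≤ 1) (hx : 0 ≤ x) :
    0 ≤ parityFactor ε₀ x k :=
  add_nonneg h0 (mul_nonneg (sub_nonneg.2 h1) (by positivity))

lemma parityFactor_le_of_pow_le {t : ℝ} (h1 : ε₀ ≤ 1) (h : x ^ k ≤ t) :
    parityFactor ε₀ x k ≤ 1 - (1 - ε₀) * (1 - t) / 2 := by
  rw [parityFactor_eq]
  linarith [mul_le_mul_of_nonneg_left h (sub_nonneg.2 h1)]

lemma parityFactor_le_of_le_mul (h1 : ε₀ ≤ 1) (hp : 2 * p ≤ 1) (hk : b ≤ k * (2 * p)) :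
    parityFactor ε₀ (1 - 2 * p) k ≤ 1 - (1 - ε₀) * (1 - exp (-b)) / 2 :=
  parityFactor_le_of_pow_le h1
    ((one_sub_pow_le_exp_neg_mul hp k).trans (exp_le_exp.2 (neg_le_neg hk)))

lemma parityFactor_le_exp (h1 : ε₀ ≤ 1) (hp0 : 0 ≤ p) (hp : 2 * p ≤ 1) (hk : k * p ≤ b) :
    parityFactor ε₀ (1 - 2 * p) k ≤ exp (-((1 - ε₀) * (1 - b) * (k * p))) := by
  have hkp : 0 ≤ k * p := by positivity
  have hpow : (1 - 2 * p) ^ k ≤ 1 - 2 * (k * p) * (1 - b) :=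
    calc (1 - 2 * p) ^ k ≤ exp (-(k * (2 * p))) := one_sub_pow_le_exp_neg_mul hp k
      _ ≤ 1 - k * (2 * p) + (k * (2 * p)) ^ 2 / 2 :=
        exp_neg_le_one_sub_add_sq_div_two (by positivity)
      _ ≤ 1 - 2 * (k * p) * (1 - b) := by nlinarith
  calc parityFactor ε₀ (1 - 2 * p) k
      ≤ 1 - (1 - ε₀) * (1 - (1 - 2 * (k * p) * (1 - b))) / 2 :=
        parityFactor_le_of_pow_le h1 hpow
    _ = 1 - (1 - ε₀) * (1 - b) * (k * p) := by ring
    _ ≤ _ := one_sub_le_exp_neg _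

end parityFactor

lemma choose_mul_pow_mul_parityFactor_pow_le {N k : ℕ} (hN : 0 < N) {ε₀ ε p c b : ℝ}
    (h0 : 0 ≤ ε₀) (h1 : ε₀ ≤ 1) (hε : 0 ≤ ε) (hp0 : 0 ≤ p) (hp : 2 * p ≤ 1)
    (hpN : p * N = c * log N) (hk : k * p ≤ b) :
    N.choose k * ε ^ k * parityFactor ε₀ (1 - 2 * p) k ^ N
      ≤ (ε * (N : ℝ) ^ (1 - c * (1 - ε₀) * (1 - b))) ^ k := by
  set a := c * (1 - ε₀) * (1 - b)
  have hNpos : (0 : ℝ) < N := by exact_mod_cast hN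
  have hq0 : 0 ≤ parityFactor ε₀ (1 - 2 * p) k := parityFactor_nonneg h0 h1 (by linarith)
  have hq : parityFactor ε₀ (1 - 2 * p) k ^ N ≤ ((N : ℝ) ^ (-a)) ^ k :=
    calc parityFactor ε₀ (1 - 2 * p) k ^ N
        ≤ exp (-((1 - ε₀) * (1 - b) * (k * p))) ^ N :=
          pow_le_pow_left₀ hq0 (parityFactor_le_exp h1 hp0 hp hk) N
      _ = ((N : ℝ) ^ (-a)) ^ k := by
        rw [rpow_def_of_pos hNpos, ← exp_nat_mul, ← exp_nat_mul]
        congr 1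
        linear_combination (-((1 - ε₀) * (1 - b) * k)) * hpN
  calc (N.choose k : ℝ) * ε ^ k * parityFactor ε₀ (1 - 2 * p) k ^ N
      ≤ (N : ℝ) ^ k * ε ^ k * ((N : ℝ) ^ (-a)) ^ k := by
        gcongr
        exact_mod_cast Nat.choose_le_pow N k
    _ = (ε * (N : ℝ) ^ (1 - a)) ^ k := by
        rw [sub_eq_add_neg, rpow_add hNpos, rpow_one]
        ring

lemma sum_choose_mul_pow_le_one_add_pow {N : ℕ} {s : Finset ℕ} (hs : ∀ k ∈ s, k ≤ N)
    {ε : ℝ} (hε : 0 ≤ ε) : ∑ k ∈ s, (N.choose k : ℝ) * ε ^ k ≤ (1 + ε) ^ N :=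
  calc ∑ k ∈ s, (N.choose k : ℝ) * ε ^ k
      ≤ ∑ k ∈ range (N + 1), (N.choose k : ℝ) * ε ^ k :=
        sum_le_sum_of_subset_of_nonneg (fun k hk => mem_range_succ_iff.2 (hs k hk))
          fun _ _ _ => by positivity
    _ = (1 + ε) ^ N := by
        rw [add_comm 1 ε, add_pow]
        simp only [one_pow, mul_one, mul_comm]

lemma sum_choose_mul_pow_mul_pow_le {N : ℕ} {s : Finset ℕ} (hs : ∀ k ∈ s, k ≤ N)
    {ε A : ℝ} {f : ℕ → ℝ} (hε : 0 ≤ ε) (hA : A ≤ 1) (hεA : ε ≤ A / 2)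
    (hf : ∀ k ∈ s, 0 ≤ f k ∧ f k ≤ 1 - A) :
    ∑ k ∈ s, (N.choose k : ℝ) * ε ^ k * f k ^ N ≤ (1 - A / 2) ^ N :=
  calc ∑ k ∈ s, (N.choose k : ℝ) * ε ^ k * f k ^ N
      ≤ ∑ k ∈ s, (N.choose k : ℝ) * ε ^ k * (1 - A) ^ N :=
        sum_le_sum fun k hk => by gcongr; exacts [(hf k hk).1, (hf k hk).2]
    _ ≤ (1 + ε) ^ N * (1 - A) ^ N := by
        rw [← sum_mul]
        gcongr
        exact sum_choose_mul_pow_le_one_add_pow hs hε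
    _ = ((1 + ε) * (1 - A)) ^ N := (mul_pow ..).symm
    _ ≤ (1 - A / 2) ^ N := by
        gcongr
        nlinarith

lemma card_filter_mul_le_le_div {N : ℕ} {p b : ℝ} (hp : 0 < p) (hb : 0 ≤ b) :
    (#{k ∈ Icc 1 N | (k : ℕ) * p ≤ b} : ℝ) ≤ b / p := by
  have hsub : {k ∈ Icc 1 N | (k : ℕ) * p ≤ b} ⊆ Icc 1 ⌊b / p⌋₊ := by
    intro k hk
    simp only [mem_filter, mem_Icc] at hk ⊢
    exact ⟨hk.1.1, Nat.le_floor ((le_div_iff₀ hp).2 hk.2)⟩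
  calc (#{k ∈ Icc 1 N | (k : ℕ) * p ≤ b} : ℝ) ≤ #(Icc 1 ⌊b / p⌋₊) := by
        exact_mod_cast card_le_card hsub
    _ = ⌊b / p⌋₊ := by simp
    _ ≤ b / p := Nat.floor_le (by positivity)

lemma sum_filter_mul_le_le_div_mul {N : ℕ} {p b X : ℝ} {f : ℕ → ℝ} (hp : 0 < p)
    (hb : 0 ≤ b) (hX : 0 ≤ X) (hf : ∀ k ∈ Icc 1 N, (k : ℕ) * p ≤ b → f k ≤ X) :
    ∑ k ∈ Icc 1 N with (k : ℕ) * p ≤ b, f k ≤ b / p * X :=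
  calc ∑ k ∈ Icc 1 N with (k : ℕ) * p ≤ b, f k
      ≤ #{k ∈ Icc 1 N | (k : ℕ) * p ≤ b} • X :=
        sum_le_card_nsmul _ _ _ fun k hk => hf k (mem_filter.1 hk).1 (mem_filter.1 hk).2
    _ ≤ b / p * X := by
        rw [nsmul_eq_mul]
        gcongr
        exact card_filter_mul_le_le_div hp hb

/-- **Analytic core of Theorem 4.**
With `p = c ln N / N ≤ 1/2`, `A_δ = (1−ε₀)(1−e^{−2cδ})/2`,
`a = c(1−ε₀)(1−cδ)`, `0 < ε ≤ A_δ/2` and `e ε N^{1−a} ≤ 1`, the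
error-probability sum is bounded by an exponentially decaying term plus a
polynomially decaying term:
`Σ_{k=1}^N C(N,k) ε^k (ε₀ + (1−ε₀)(1+(1−2p)^k)/2)^N
  ≤ (1 − A_δ/2)^N + δ e ε N^{2−a} / ln N`. -/
theorem stmt9 (N : ℕ) (hN : 2 ≤ N) (c : ℝ) (hc : 0 < c)
    (hp : c * Real.log N / N ≤ 1 / 2) (δ : ℝ) (hδ : 0 < δ)
    (ε₀ : ℝ) (hε₀0 : 0 ≤ ε₀) (hε₀1 : ε₀ < 1)
    (ε : ℝ) (hε0 : 0 < ε)
    (hεA : ε ≤ ((1 - ε₀) * (1 - Real.exp (-(2 * c * δ))) / 2) / 2)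
    (hεN : Real.exp 1 * ε * (N : ℝ) ^ ((1 : ℝ) - c * (1 - ε₀) * (1 - c * δ)) ≤ 1) :
    ∑ k ∈ Finset.Icc 1 N, (N.choose k : ℝ) * ε ^ k *
        (ε₀ + (1 - ε₀) * ((1 + (1 - 2 * (c * Real.log N / N)) ^ k) / 2)) ^ N
      ≤ (1 - ((1 - ε₀) * (1 - Real.exp (-(2 * c * δ))) / 2) / 2) ^ N
        + δ * Real.exp 1 * ε *
            (N : ℝ) ^ ((2 : ℝ) - c * (1 - ε₀) * (1 - c * δ)) / Real.log N := by
  set p := c * log N / N with hp_def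
  set X := ε * (N : ℝ) ^ (1 - c * (1 - ε₀) * (1 - c * δ)) with hX_def
  have hN1 : (1 : ℝ) < N := by exact_mod_cast hN
  have hL : 0 < log N := log_pos hN1
  have hp0 : 0 < p := by positivity
  have hpN : p * N = c * log N := div_mul_cancel₀ _ (by positivity)
  have hX0 : 0 ≤ X := by positivity
  have he : 1 ≤ exp 1 := one_le_exp zero_le_one
  have hX1 : X ≤ 1 :=
    (le_mul_of_one_le_left hX0 he).trans ((mul_assoc _ _ _).symm.trans_le hεN)
  rw [← sum_filter_add_sum_filter_not (Icc 1 N) (fun k : ℕ => (k : ℝ) * p ≤ c * δ),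
    add_comm]
  refine add_le_add ?_ ?_
  · refine sum_choose_mul_pow_mul_pow_le (fun k hk => (mem_Icc.1 (mem_filter.1 hk).1).2)
      hε0.le (by nlinarith [exp_pos (-(2 * c * δ))]) hεA fun k hk =>
      ⟨parityFactor_nonneg hε₀0 hε₀1.le (by linarith), parityFactor_le_of_le_mul hε₀1.le
        (by linarith) (by linarith [not_le.1 (mem_filter.1 hk).2])⟩
  · have hterm : ∀ k ∈ Icc 1 N, (k : ℝ) * p ≤ c * δ →
        (N.choose k : ℝ) * ε ^ k * parityFactor ε₀ (1 - 2 * p) k ^ N ≤ X := fun k hk hkp =>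
      (choose_mul_pow_mul_parityFactor_pow_le (by omega) hε₀0 hε₀1.le hε0.le hp0.le
        (by linarith) hpN hkp).trans
        (pow_le_of_le_one hX0 hX1 (Nat.one_le_iff_ne_zero.1 (mem_Icc.1 hk).1))
    calc _ ≤ c * δ / p * X := sum_filter_mul_le_le_div_mul hp0 (by positivity) hX0 hterm
      _ = δ * ε * N ^ (2 - c * (1 - ε₀) * (1 - c * δ)) / log N := by
        rw [hp_def, hX_def, show (2 : ℝ) - c * (1 - ε₀) * (1 - c * δ)
          = 1 + (1 - c * (1 - ε₀) * (1 - c * δ)) by ring, rpow_add (by positivity), rpow_one]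
        field_simp
      _ ≤ _ := by gcongr; exact le_mul_of_one_le_right hδ.le he
end

section
/- Let N ≥ 2 be an integer, let c > 0 with p := c·ln N / N ≤ 1/2, let ε₀ ∈ [0,1), let ε ∈ [0,1], let δ > 0, and let k be an integer with 1 ≤ k ≤ N and (k−1)·ln N ≤ δ·N. Then C(N,k) · ε^k · (ε₀ + (1−ε₀)·(1+(1−2p)^k)/2)^N ≤ ((e/k) · ε · N^{1 − c(1−ε₀)(1−cδ)})^k. -/
lemma aux_taylor (x : ℝ) (hx0 : 0 ≤ x) (hx1 : x ≤ 1) (k : ℕ) :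
    (1 - x) ^ k ≤ 1 - k * x + k * (k - 1) / 2 * x ^ 2 := by
  induction k with
  | zero => simp
  | succ n ih =>
    have h1 : (0:ℝ) ≤ 1 - x := by linarith
    have h2 : (1 - x) ^ (n+1) = (1 - x) * (1 - x) ^ n := by ring
    have h3 : (1 - x) * (1 - x) ^ n ≤ (1 - x) * (1 - n * x + n * (n - 1) / 2 * x ^ 2) :=
      mul_le_mul_of_nonneg_left ih h1
    have hn : (0:ℝ) ≤ n := Nat.cast_nonneg n
    have hnn : (0:ℝ) ≤ (n:ℝ) * ((n:ℝ) - 1) := by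
      rcases Nat.eq_zero_or_pos n with h | h
      · simp [h]
      · have : (1:ℝ) ≤ n := by exact_mod_cast h
        nlinarith
    push_cast
    nlinarith [h2, h3, mul_nonneg hnn (mul_nonneg (mul_nonneg hx0 hx0) hx0)]

lemma aux_choose (N k : ℕ) (hk : 1 ≤ k) :
    (N.choose k : ℝ) ≤ ((N : ℝ) * Real.exp 1 / k) ^ k := by
  have hkpos : (0:ℝ) < k := by exact_mod_cast hk
  have hfac : (0:ℝ) < (k.factorial : ℝ) := by exact_mod_cast k.factorial_pos
  have h1 : (N.choose k : ℝ) ≤ (N : ℝ) ^ k / (k.factorial : ℝ) := by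
    exact_mod_cast Nat.choose_le_pow_div k N
  have h2 : (k : ℝ) ^ k / (k.factorial : ℝ) ≤ Real.exp k :=
    Real.pow_div_factorial_le_exp (x := (k:ℝ)) (Nat.cast_nonneg k) k
  have h3 : (k : ℝ) ^ k ≤ (k.factorial : ℝ) * Real.exp 1 ^ k := by
    rw [← Real.exp_nat_mul]
    have := h2
    rw [div_le_iff₀ hfac] at this
    simpa [mul_comm] using this
  calc (N.choose k : ℝ) ≤ (N : ℝ) ^ k / (k.factorial : ℝ) := h1
    _ ≤ ((N : ℝ) * Real.exp 1 / k) ^ k := by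
        rw [div_pow, mul_pow, div_le_div_iff₀ hfac (by positivity)]
        calc (N:ℝ)^k * (k:ℝ)^k ≤ (N:ℝ)^k * ((k.factorial : ℝ) * Real.exp 1 ^ k) := by
              exact mul_le_mul_of_nonneg_left h3 (by positivity)
          _ = (N:ℝ)^k * Real.exp 1 ^ k * (k.factorial:ℝ) := by ring

/-- **Small-`k` term bound in the proof of Theorem 4.**
With `p = c ln N / N ≤ 1/2` and `(k−1) ln N ≤ δ N`, for `1 ≤ k ≤ N`:
`C(N,k) ε^k (ε₀ + (1−ε₀)(1+(1−2p)^k)/2)^N ≤ ((e/k) ε N^{1−c(1−ε₀)(1−cδ)})^k`. -/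
theorem stmt10 (N : ℕ) (hN : 2 ≤ N) (c : ℝ) (hc : 0 < c)
    (hp : c * Real.log N / N ≤ 1 / 2)
    (ε₀ : ℝ) (hε₀0 : 0 ≤ ε₀) (hε₀1 : ε₀ < 1)
    (ε : ℝ) (hε0 : 0 ≤ ε) (hε1 : ε ≤ 1) (δ : ℝ) (hδ : 0 < δ)
    (k : ℕ) (hk1 : 1 ≤ k) (hkN : k ≤ N)
    (hkδ : ((k : ℝ) - 1) * Real.log N ≤ δ * N) :
    (N.choose k : ℝ) * ε ^ k *
        (ε₀ + (1 - ε₀) * ((1 + (1 - 2 * (c * Real.log N / N)) ^ k) / 2)) ^ N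
      ≤ ((Real.exp 1 / k) * ε *
          (N : ℝ) ^ ((1 : ℝ) - c * (1 - ε₀) * (1 - c * δ))) ^ k := by
  set p : ℝ := c * Real.log N / N with hpdef
  have hNpos : (0:ℝ) < N := by positivity
  have hN1 : (1:ℝ) < N := by exact_mod_cast hN
  have hlogN : 0 < Real.log N := Real.log_pos hN1
  have hp0 : 0 ≤ p := by positivity
  have hkpos : (0:ℝ) < k := by exact_mod_cast hk1
  -- Taylor bound
  have htay : (1 - 2*p) ^ k ≤ 1 - k * (2*p) + k * (k-1)/2 * (2*p)^2 :=
    aux_taylor (2*p) (by linarith) (by linarith) k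
  set B : ℝ := ε₀ + (1 - ε₀) * ((1 + (1 - 2*p) ^ k) / 2) with hBdef
  have hε₀1' : (0:ℝ) < 1 - ε₀ := by linarith
  -- (k-1)p ≤ cδ
  have hkp : ((k:ℝ) - 1) * p ≤ c * δ := by
    have : ((k:ℝ)-1) * p = c * (((k:ℝ)-1) * Real.log N) / N := by
      rw [hpdef]; ring
    rw [this, div_le_iff₀ hNpos]
    calc c * (((k:ℝ)-1) * Real.log N) ≤ c * (δ * N) :=
          mul_le_mul_of_nonneg_left hkδ hc.le
      _ = c * δ * N := by ring
  set t : ℝ := (1 - ε₀) * (k * p) * (1 - c*δ) with htdef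
  have hB0 : 0 ≤ B := by
    have : (0:ℝ) ≤ (1 - 2*p)^k := pow_nonneg (by linarith) k
    have : (0:ℝ) ≤ (1 + (1-2*p)^k)/2 := by linarith
    positivity
  have hBle : B ≤ 1 - t := by
    have h1 : B ≤ 1 - (1-ε₀) * (k*p) * (1 - ((k:ℝ)-1)*p) := by
      rw [hBdef]; nlinarith [htay, hε₀1']
    have h2 : (1-ε₀) * (k*p) * (1 - c*δ) ≤ (1-ε₀) * (k*p) * (1 - ((k:ℝ)-1)*p) := by
      apply mul_le_mul_of_nonneg_left (by linarith) (by positivity)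
    rw [htdef]; linarith
  have hBN : B ^ N ≤ Real.exp (-(t * N)) := by
    calc B ^ N ≤ (Real.exp (-t)) ^ N := by
          apply pow_le_pow_left₀ hB0
          calc B ≤ 1 - t := hBle
            _ ≤ Real.exp (-t) := by
                have := Real.add_one_le_exp (-t); linarith
      _ = Real.exp (-(t*N)) := by rw [← Real.exp_nat_mul]; ring_nf
  set a : ℝ := c * (1 - ε₀) * (1 - c*δ) with hadef
  have hpN : p * N = c * Real.log N := by
    rw [hpdef]; field_simp
  have htN : t * N = a * k * Real.log N := by
    rw [htdef, hadef]
    have : (1 - ε₀) * ((k:ℝ) * p) * (1 - c*δ) * N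
        = (1 - ε₀) * (k:ℝ) * (1 - c*δ) * (p * N) := by ring
    rw [this, hpN]; ring
  have hexp : Real.exp (-(t*N)) = (N:ℝ) ^ (-(a * k)) := by
    rw [Real.rpow_def_of_pos hNpos, htN]; ring_nf
  -- combine
  have hchoose := aux_choose N k hk1
  have hRHS : ((Real.exp 1 / k) * ε * (N : ℝ) ^ ((1:ℝ) - a)) ^ k
      = ((N:ℝ) * Real.exp 1 / k) ^ k * ε ^ k * (N:ℝ) ^ (-(a * k)) := by
    rw [mul_pow, mul_pow, ← Real.rpow_natCast ((N:ℝ) ^ ((1:ℝ) - a)) k,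
      ← Real.rpow_mul hNpos.le]
    have h1 : ((1:ℝ) - a) * k = (k:ℝ) + (-(a*k)) := by ring
    rw [h1, Real.rpow_add hNpos, Real.rpow_natCast]
    ring
  rw [hRHS]
  have hcnn : (0:ℝ) ≤ (N.choose k : ℝ) := Nat.cast_nonneg _
  have hεk : (0:ℝ) ≤ ε ^ k := pow_nonneg hε0 k
  calc (N.choose k : ℝ) * ε ^ k * B ^ N
      ≤ (N.choose k : ℝ) * ε ^ k * Real.exp (-(t*N)) := by
        apply mul_le_mul_of_nonneg_left hBN (by positivity)
    _ = (N.choose k : ℝ) * ε ^ k * (N:ℝ) ^ (-(a*k)) := by rw [hexp]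
    _ ≤ ((N:ℝ) * Real.exp 1 / k) ^ k * ε ^ k * (N:ℝ) ^ (-(a*k)) := by
        apply mul_le_mul_of_nonneg_right _ (by positivity)
        exact mul_le_mul_of_nonneg_right hchoose hεk
end

section
/- Let N ≥ 1 be an integer, let p be a real number with 1/N < p ≤ 1/2, and let k be an integer with 1 ≤ k ≤ N. Then 2k / (1 − (1−2p)^k) ≤ 2N / (1 − 1/e). -/
/-- **Key inequality (kkey) in the GC-3 analysis.**
For `1/N < p ≤ 1/2` and `1 ≤ k ≤ N`:
`2k / (1 − (1−2p)^k) ≤ 2N / (1 − 1/e)`. -/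
theorem stmt13 (N : ℕ) (hN : 1 ≤ N) (p : ℝ) (hp1 : 1 / (N : ℝ) < p)
    (hp2 : p ≤ 1 / 2) (k : ℕ) (hk1 : 1 ≤ k) (hkN : k ≤ N) :
    2 * (k : ℝ) / (1 - (1 - 2 * p) ^ k)
      ≤ 2 * (N : ℝ) / (1 - 1 / Real.exp 1) := by
  have hNpos : (0 : ℝ) < N := by exact_mod_cast Nat.pos_of_ne_zero (by omega)
  have hkpos : (0 : ℝ) < k := by exact_mod_cast Nat.pos_of_ne_zero (by omega)
  have hkN' : (k : ℝ) ≤ N := by exact_mod_cast hkN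
  have hp0 : 0 < p := lt_trans (by positivity) hp1
  have hbase0 : 0 ≤ 1 - 2 * p := by linarith
  have hbase1 : 1 - 2 * p < 1 := by linarith
  -- (1-2p)^k ≤ exp(-2pk)
  have hle : (1 - 2 * p) ^ k ≤ Real.exp (-(2 * p * k)) := by
    have h1 : 1 - 2 * p ≤ Real.exp (-(2 * p)) := by
      have := Real.add_one_le_exp (-(2 * p)); linarith
    calc (1 - 2 * p) ^ k ≤ Real.exp (-(2 * p)) ^ k :=
          pow_le_pow_left₀ hbase0 h1 k
      _ = Real.exp (-(2 * p) * k) := by rw [← Real.exp_nat_mul]; ring_nf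
      _ = Real.exp (-(2 * p * k)) := by ring_nf
  have hx1 : (1 - 2 * p) ^ k < 1 := pow_lt_one₀ hbase0 hbase1 (by omega)
  have he : (0 : ℝ) < Real.exp 1 := Real.exp_pos 1
  have he1 : (1 : ℝ) < Real.exp 1 := by
    have := Real.add_one_le_exp (1 : ℝ); linarith
  have hd1 : (0 : ℝ) < 1 - (1 - 2 * p) ^ k := by linarith
  have hd2 : (0 : ℝ) < 1 - 1 / Real.exp 1 := by
    rw [sub_pos, div_lt_one he]; exact he1
  rw [div_le_div_iff₀ hd1 hd2]
  -- goal: 2k * (1 - 1/e) ≤ 2N * (1 - (1-2p)^k)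
  by_cases hcase : 2 * p * k ≥ 1
  · -- exp(-2pk) ≤ exp(-1) = 1/e
    have h2 : Real.exp (-(2 * p * k)) ≤ Real.exp (-1) :=
      Real.exp_le_exp.mpr (by linarith)
    have h3 : Real.exp (-1) = 1 / Real.exp 1 := by
      rw [Real.exp_neg]; ring
    have : (1 - 2 * p) ^ k ≤ 1 / Real.exp 1 := by rw [← h3]; linarith
    nlinarith [mul_le_mul_of_nonneg_right hkN' hd2.le]
  · push_neg at hcase
    set u := 2 * p * k with hu
    have hu0 : 0 < u := by positivity
    -- exp(-u) ≤ 1/(1+u) ≤ 1 - u/2 for u ≤ 1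
    have h1 : Real.exp (-u) ≤ 1 / (1 + u) := by
      rw [le_div_iff₀ (by linarith : (0:ℝ) < 1 + u)]
      have h := Real.add_one_le_exp u
      have hpos := Real.exp_pos (-u)
      have hmul : Real.exp (-u) * Real.exp u = 1 := by
        rw [← Real.exp_add]; simp
      nlinarith
    have h2 : 1 / (1 + u) ≤ 1 - u / 2 := by
      rw [div_le_iff₀ (by linarith)]
      nlinarith
    have hxle : (1 - 2 * p) ^ k ≤ 1 - u / 2 := le_trans hle (le_trans h1 h2)
    -- u/2 = p*k > k/N, so N*(1-x) ≥ N*p*k > k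
    have hpk : (k : ℝ) / N < p * k := by
      rw [div_lt_iff₀ hNpos]
      nlinarith [mul_lt_mul_of_pos_right hp1 hkpos, (div_lt_iff₀ hNpos).mp hp1]
    have hNk : (k : ℝ) < N * (p * k) := by
      have := (div_lt_iff₀ hNpos).mp hp1
      nlinarith
    have hu2 : u / 2 = p * k := by rw [hu]; ring
    have hNe : (k : ℝ) ≤ N * (1 - (1 - 2 * p) ^ k) := by
      have h11 : p * k ≤ 1 - (1 - 2 * p) ^ k := by rw [← hu2]; linarith
      have h12 : (N:ℝ) * (p * k) ≤ N * (1 - (1 - 2 * p) ^ k) :=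
        mul_le_mul_of_nonneg_left h11 hNpos.le
      linarith
    have h9 : 1 - 1 / Real.exp 1 ≤ 1 := by
      have : 0 < 1 / Real.exp 1 := by positivity
      linarith
    have h10 : 2 * (k:ℝ) * (1 - 1 / Real.exp 1) ≤ 2 * (k:ℝ) * 1 :=
      mul_le_mul_of_nonneg_left h9 (by positivity)
    linarith
end
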